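/- arXiv:1909.09795 — 2 statements merged into one kernel-verified Lean document; each statement's English description precedes it below -/
import Mathlib

section
/- Let I be an open real interval containing [0, 1] and φ ∈ C^{1,1}(I) (φ differentiable with locally Lipschitz derivative φ'). Then there exists t₀ ∈ (0, 1) such that φ(1) − φ(0) − φ'(0) ∈ ½ ∂φ'(t₀), where ∂φ'(t₀) is the Clarke subdifferential of φ' at t₀. -/
open Filter Set

/-- The Clarke generalized directional derivative of `g` at `x₀` in direction `h`. -/
noncomputable def clarkeDeriv {X : Type*} [NormedAddCommGroup X] [NormedSpace ℝ X]
    (g : X → ℝ) (x₀ h : X) : ℝ :=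
  Filter.limsup (fun p : X × ℝ => (g (p.1 + p.2 • h) - g p.1) / p.2)
    ((nhds x₀) ×ˢ (nhdsWithin 0 (Set.Ioi 0)))

/-- The Clarke subdifferential of `g` at `x₀`. -/
def clarkeSubdiff {X : Type*} [NormedAddCommGroup X] [NormedSpace ℝ X]
    (g : X → ℝ) (x₀ : X) : Set (X →L[ℝ] ℝ) :=
  {L | ∀ h, L h ≤ clarkeDeriv g x₀ h}

/-- `f'` is the Gâteaux derivative of `f` on `D`. -/
def IsGateauxDerivOn {X E : Type*} [NormedAddCommGroup X] [NormedSpace ℝ X]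
    [NormedAddCommGroup E] [NormedSpace ℝ E]
    (f : X → E) (f' : X → X →L[ℝ] E) (D : Set X) : Prop :=
  ∀ x ∈ D, ∀ h : X, HasDerivAt (fun t : ℝ => f (x + t • h)) (f' x h) 0

/-- `g` is locally Lipschitz on the set `D`. -/
def LocallyLipschitzOnSet {X E : Type*} [NormedAddCommGroup X] [NormedSpace ℝ X]
    [NormedAddCommGroup E] (g : X → E) (D : Set X) : Prop :=
  ∀ x ∈ D, ∃ ε > 0, ∃ K : NNReal, LipschitzOnWith K g (Metric.ball x ε ∩ D)

/-- `f` is of class `C^{1,1}` on `D`, witnessed by its Gâteaux derivative `f'`. -/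
def IsC11On {X : Type*} [NormedAddCommGroup X] [NormedSpace ℝ X]
    (f : X → ℝ) (f' : X → X →L[ℝ] ℝ) (D : Set X) : Prop :=
  IsGateauxDerivOn f f' D ∧ LocallyLipschitzOnSet f' D

/-- The second-order subdifferential `∂²f(x₀)(d) = ∂⟨f'(·), d⟩(x₀)`. -/
def secondSubdiff {X : Type*} [NormedAddCommGroup X] [NormedSpace ℝ X]
    (f' : X → X →L[ℝ] ℝ) (x₀ d : X) : Set (X →L[ℝ] ℝ) :=
  clarkeSubdiff (fun x => f' x d) x₀

/-- The Clarke subdifferential of a real function of a real variable, as a set of reals. -/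
def realClarkeSubdiff (g : ℝ → ℝ) (t₀ : ℝ) : Set ℝ :=
  {s : ℝ | ∀ h : ℝ, s * h ≤ clarkeDeriv g t₀ h}

/-!
Choose `s` so that `ψ t = φ t - φ' 0 * t - s / 2 * t ^ 2` satisfies `ψ 0 = ψ 1`. Rolle's theorem
for `ψ` gives `t₁ ∈ (0, 1)` at which `g t = φ' t - s * t` takes the value `g 0`, and Rolle's theorem
for `g` on `[0, t₁]` gives an interior local extremum `t₀` of `g`. At a local extremum of `g` the
difference quotients of `g` defining the Clarke derivative are frequently nonnegative, so those
of `φ'` are frequently at least `s * h`; being bounded above by the Lipschitz constant, their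
limsup is at least `s * h`.
-/

open scoped Topology

theorem LocallyLipschitzOnSet.continuousOn {X E : Type*} [NormedAddCommGroup X]
    [NormedSpace ℝ X] [NormedAddCommGroup E] {g : X → E} {D : Set X}
    (hg : LocallyLipschitzOnSet g D) : ContinuousOn g D := by
  intro x hx
  obtain ⟨ε, hε, K, hK⟩ := hg x hx
  exact (hK.continuousOn.continuousWithinAt ⟨Metric.mem_ball_self hε, hx⟩).mono_of_mem_nhdsWithin
    (inter_mem (mem_nhdsWithin_of_mem_nhds (Metric.ball_mem_nhds x hε)) self_mem_nhdsWithin)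

theorem LocallyLipschitzOnSet.exists_lipschitzOnWith_of_isOpen {X E : Type*}
    [NormedAddCommGroup X] [NormedSpace ℝ X] [NormedAddCommGroup E] {g : X → E} {D : Set X}
    (hg : LocallyLipschitzOnSet g D) (hD : IsOpen D) {x : X} (hx : x ∈ D) :
    ∃ K : NNReal, ∃ U ∈ 𝓝 x, LipschitzOnWith K g U := by
  obtain ⟨ε, hε, K, hK⟩ := hg x hx
  exact ⟨K, _, inter_mem (Metric.ball_mem_nhds x hε) (hD.mem_nhds hx), hK⟩

section ClarkeQuotient

variable {X : Type*} [NormedAddCommGroup X] [NormedSpace ℝ X] {g : X → ℝ} {x₀ : X}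

theorem LipschitzOnWith.eventually_clarkeQuotient_le {K : NNReal} {U : Set X}
    (hg : LipschitzOnWith K g U) (hU : U ∈ 𝓝 x₀) (h : X) :
    ∀ᶠ p : X × ℝ in 𝓝 x₀ ×ˢ 𝓝[>] 0, (g (p.1 + p.2 • h) - g p.1) / p.2 ≤ K * ‖h‖ := by
  have hshift : Tendsto (fun p : X × ℝ => p.1 + p.2 • h) (𝓝 x₀ ×ˢ 𝓝[>] 0) (𝓝 x₀) := by
    have hcont : Continuous (fun p : X × ℝ => p.1 + p.2 • h) := by fun_prop
    simpa using (hcont.tendsto (x₀, 0)).mono_left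
      (by rw [nhds_prod_eq]; exact Filter.prod_mono le_rfl nhdsWithin_le_nhds)
  filter_upwards [Eventually.prod_inl hU _, hshift.eventually_mem hU,
    Eventually.prod_inr self_mem_nhdsWithin _] with p hp hph (hpos : 0 < p.2)
  rw [div_le_iff₀ hpos]
  calc g (p.1 + p.2 • h) - g p.1 ≤ dist (g (p.1 + p.2 • h)) (g p.1) := le_abs_self _
    _ ≤ K * dist (p.1 + p.2 • h) p.1 := hg.dist_le_mul _ hph _ hp
    _ = K * ‖h‖ * p.2 := by
      rw [dist_eq_norm, add_sub_cancel_left, norm_smul, Real.norm_of_nonneg hpos.le]; ring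

theorem IsLocalExtr.frequently_clarkeQuotient_nonneg (hg : IsLocalExtr g x₀) (h : X) :
    ∃ᶠ p : X × ℝ in 𝓝 x₀ ×ˢ 𝓝[>] 0, 0 ≤ (g (p.1 + p.2 • h) - g p.1) / p.2 := by
  have hray : ∀ v : X, Tendsto (fun ε : ℝ => x₀ + ε • v) (𝓝[>] 0) (𝓝 x₀) := fun v => by
    have hcont : Continuous (fun ε : ℝ => x₀ + ε • v) := by fun_prop
    simpa using (hcont.tendsto 0).mono_left nhdsWithin_le_nhds
  have hpath : ∀ v : X, Tendsto (fun ε : ℝ => (x₀ + ε • v, ε)) (𝓝[>] 0) (𝓝 x₀ ×ˢ 𝓝[>] 0) :=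
    fun v => (hray v).prodMk tendsto_id
  rcases hg with hmin | hmax
  · refine (hpath 0).frequently (Eventually.frequently ?_)
    filter_upwards [(hray h).eventually hmin, self_mem_nhdsWithin] with ε hε (hpos : 0 < ε)
    simpa using div_nonneg (sub_nonneg.2 hε) hpos.le
  · -- Approach `x₀` from the side opposite to `h`, so that the quotient ends at `x₀`.
    refine (hpath (-h)).frequently (Eventually.frequently ?_)
    filter_upwards [(hray (-h)).eventually hmax, self_mem_nhdsWithin] with ε hε (hpos : 0 < ε)
    simpa using div_nonneg (sub_nonneg.2 hε) hpos.le

end ClarkeQuotient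

theorem mem_realClarkeSubdiff_of_isLocalExtr_sub_mul {f : ℝ → ℝ} {K : NNReal} {U : Set ℝ}
    {t₀ s : ℝ} (hf : LipschitzOnWith K f U) (hU : U ∈ 𝓝 t₀)
    (hext : IsLocalExtr (fun t => f t - s * t) t₀) : s ∈ realClarkeSubdiff f t₀ := by
  intro h
  refine le_limsup_of_frequently_le ?_
    (isBoundedUnder_of_eventually_le (hf.eventually_clarkeQuotient_le hU h))
  refine ((hext.frequently_clarkeQuotient_nonneg h).and_eventually
    (Eventually.prod_inr self_mem_nhdsWithin _)).mono ?_
  rintro ⟨t, ε⟩ ⟨hq, hε : 0 < ε⟩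
  have hquot : (f (t + ε • h) - s * (t + ε • h) - (f t - s * t)) / ε
      = (f (t + ε • h) - f t) / ε - s * h := by
    field_simp
    rw [smul_eq_mul]
    ring
  rw [hquot] at hq
  linarith

theorem exists_isLocalExtr_sub_mul_of_hasDerivAt {φ φ' : ℝ → ℝ} {a b s : ℝ} (hab : a < b)
    (hφ : ∀ t ∈ Icc a b, HasDerivAt φ (φ' t) t) (hφ' : ContinuousOn φ' (Icc a b))
    (hs : φ b - φ a - φ' a * (b - a) = s / 2 * (b - a) ^ 2) :
    ∃ t₀ ∈ Ioo a b, IsLocalExtr (fun t => φ' t - s * t) t₀ := by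
  set ψ : ℝ → ℝ := fun t => φ t - φ' a * (t - a) - s / 2 * (t - a) ^ 2
  have hψ : ∀ t ∈ Icc a b, HasDerivAt ψ (φ' t - φ' a - s * (t - a)) t := fun t ht => by
    have hlin : HasDerivAt (fun t => φ' a * (t - a)) (φ' a) t := by
      simpa using ((hasDerivAt_id t).sub_const a).const_mul (φ' a)
    have hsq : HasDerivAt (fun t => s / 2 * (t - a) ^ 2) (s * (t - a)) t :=
      ((((hasDerivAt_id' t).sub_const a).fun_pow 2).const_mul (s / 2)).congr_deriv (by ring)
    exact ((hφ t ht).sub hlin).sub hsq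
  have hψab : ψ a = ψ b := by
    simp only [ψ]
    linear_combination -hs
  obtain ⟨t₁, ht₁, hgt₁⟩ := exists_hasDerivAt_eq_zero hab
    (fun t ht => (hψ t ht).continuousAt.continuousWithinAt) hψab
    (fun t ht => hψ t (Ioo_subset_Icc_self ht))
  have hg : ContinuousOn (fun t => φ' t - s * t) (Icc a t₁) :=
    (hφ'.mono (Icc_subset_Icc_right ht₁.2.le)).sub (continuousOn_const.mul continuousOn_id)
  obtain ⟨t₀, ht₀, hext⟩ := exists_isLocalExtr_Ioo ht₁.1 hg (by linear_combination -hgt₁)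
  exact ⟨t₀, Ioo_subset_Ioo_right ht₁.2.le ht₀, hext⟩

theorem stmt7 {I : Set ℝ} (hI : IsOpen I) (hI01 : Set.Icc (0:ℝ) 1 ⊆ I)
    (φ φ' : ℝ → ℝ) (hφ : ∀ t ∈ I, HasDerivAt φ (φ' t) t)
    (hLip : LocallyLipschitzOnSet φ' I) :
    ∃ t₀ ∈ Set.Ioo (0:ℝ) 1, ∃ s ∈ realClarkeSubdiff φ' t₀,
      φ 1 - φ 0 - φ' 0 = (1 / 2) * s := by
  set s := 2 * (φ 1 - φ 0 - φ' 0)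
  obtain ⟨t₀, ht₀, hext⟩ := exists_isLocalExtr_sub_mul_of_hasDerivAt (s := s) zero_lt_one
    (fun t ht => hφ t (hI01 ht)) (hLip.continuousOn.mono hI01) (by ring)
  obtain ⟨K, U, hU, hK⟩ :=
    hLip.exists_lipschitzOnWith_of_isOpen hI (hI01 (Ioo_subset_Icc_self ht₀))
  exact ⟨t₀, ht₀, s, mem_realClarkeSubdiff_of_isLocalExtr_sub_mul hK hU hext, by ring⟩
end

section
/- Let D ⊆ X be open and H ∈ C^{1,1}(D) a real-valued function (in particular H is strictly Fréchet differentiable at each point). Then for every x̂ ∈ D and every direction d ∈ X, H is twice weakly directionally differentiable at x̂ in direction d, i.e., the set H''(x̂; d) is nonempty; moreover H''(x̂; d) ⊆ {⟨L, d⟩ : L ∈ ∂²H(x̂)(d)}. -/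
open Filter Set

/-- The second-order weak directional derivative set of `H` at `x₀` in direction `d`,
where `H'` is the (strict) derivative mapping of `H`. -/
noncomputable def secondWeakDirDeriv {X E : Type*} [NormedAddCommGroup X] [NormedSpace ℝ X]
    [NormedAddCommGroup E] [NormedSpace ℝ E]
    (H : X → E) (H' : X → X →L[ℝ] E) (x₀ d : X) : Set E :=
  {y | Filter.liminf
    (fun ε : ℝ => ‖y - (2 / ε ^ 2) • (H (x₀ + ε • d) - H x₀ - ε • (H' x₀ d))‖)
    (nhdsWithin 0 (Set.Ioi 0)) = 0}

/-!
Along the segment `t ↦ x₀ + t • d`, Cauchy's mean value theorem for `H (x₀ + t • d) - t * H' x₀ d`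
and `t ^ 2` writes the second-order quotient at `ε` as the difference quotient
`(g (x₀ + ξ • d) - g x₀) / ξ` of `g = fun x => H' x d` at some `ξ ∈ (0, ε)`. As `g` is Lipschitz
near `x₀`, these quotients are bounded, so the second-order quotient has a cluster point (its
limsup). Any cluster point `y` is also one of the difference quotients of `g`, whence
`y ≤ g°(x₀; d)` and `-y ≤ g°(x₀; -d)` for the Clarke derivative `g°(x₀; ·)`. The latter is
sublinear and bounded by a multiple of the norm, so Hahn–Banach extends `t • d ↦ t * y` to a
continuous functional below it, i.e. to some `L ∈ ∂g(x₀)` with `L d = y`.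
-/

open Filter Topology Metric Set

section HahnBanach

variable {E : Type*} [NormedAddCommGroup E] [NormedSpace ℝ E]

theorem exists_continuousLinearMap_le_sublinear_apply_eq (N : E → ℝ) (K : ℝ)
    (N_hom : ∀ c : ℝ, 0 < c → ∀ x, N (c • x) = c * N x) (N_add : ∀ x y, N (x + y) ≤ N x + N y)
    (N_le : ∀ x, N x ≤ K * ‖x‖) {d : E} {y : ℝ} (hy : y ≤ N d) (hy' : -y ≤ N (-d)) :
    ∃ L : E →L[ℝ] ℝ, (∀ x, L x ≤ N x) ∧ L d = y := by
  have N_zero : N 0 = 0 := by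
    have := N_hom 2 two_pos 0
    rw [smul_zero] at this
    linarith
  -- well-definedness of `c • d ↦ c * y`: if `d = 0`, then `hy` and `hy'` force `y = 0`
  have hdy : ∀ c : ℝ, c • d = 0 → (RingHom.id ℝ) c • y = 0 := by
    intro c hc
    rcases (smul_eq_zero.1 hc) with rfl | rfl
    · simp
    · rw [neg_zero, N_zero] at hy'
      rw [N_zero] at hy
      simp [le_antisymm hy (by linarith)]
  set f := LinearPMap.mkSpanSingleton' d y hdy
  have hfN : ∀ z : f.domain, f z ≤ N z := by
    rintro ⟨z, hz⟩
    obtain ⟨c, rfl⟩ := Submodule.mem_span_singleton.1 hz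
    change f ⟨c • d, hz⟩ ≤ N (c • d)
    rw [LinearPMap.mkSpanSingleton'_apply, RingHom.id_apply, smul_eq_mul]
    rcases lt_trichotomy c 0 with hc | rfl | hc
    · rw [← neg_smul_neg, N_hom (-c) (neg_pos.2 hc)]
      nlinarith
    · simp [N_zero]
    · rw [N_hom c hc]
      exact mul_le_mul_of_nonneg_left hy hc.le
  obtain ⟨G, hGf, hGN⟩ := exists_extension_of_le_sublinear f N N_hom N_add hfN
  have hG_bound : ∀ x, ‖G x‖ ≤ K * ‖x‖ := fun x => by
    have hneg : -G x ≤ K * ‖x‖ := by simpa using (hGN (-x)).trans (N_le (-x))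
    exact abs_le.2 ⟨by linarith, (hGN x).trans (N_le x)⟩
  refine ⟨G.mkContinuous K hG_bound, fun x => hGN x, ?_⟩
  rw [LinearMap.mkContinuous_apply, hGf ⟨d, Submodule.mem_span_singleton_self d⟩]
  exact LinearPMap.mkSpanSingleton'_apply_self d y hdy _

end HahnBanach

section Clarke

variable {X : Type*} [NormedAddCommGroup X] [NormedSpace ℝ X]

noncomputable def clarkeQuot (g : X → ℝ) (h : X) (p : X × ℝ) : ℝ :=
  (g (p.1 + p.2 • h) - g p.1) / p.2

theorem clarkeDeriv_eq_limsup (g : X → ℝ) (x₀ h : X) :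
    clarkeDeriv g x₀ h = limsup (clarkeQuot g h) (𝓝 x₀ ×ˢ 𝓝[>] 0) := rfl

theorem clarkeQuot_add (g : X → ℝ) (h₁ h₂ : X) (p : X × ℝ) :
    clarkeQuot g (h₁ + h₂) p = clarkeQuot g h₁ (p.1 + p.2 • h₂, p.2) + clarkeQuot g h₂ p := by
  have hpt : p.1 + p.2 • (h₁ + h₂) = p.1 + p.2 • h₂ + p.2 • h₁ := by
    rw [smul_add]
    abel
  simp only [clarkeQuot, hpt]
  ring

theorem clarkeQuot_smul (g : X → ℝ) {c : ℝ} (hc : c ≠ 0) (h : X) (p : X × ℝ) :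
    clarkeQuot g (c • h) p = c * clarkeQuot g h (p.1, c * p.2) := by
  simp only [clarkeQuot, smul_smul, mul_comm p.2 c]
  rw [← mul_div_assoc, mul_div_mul_left _ _ hc]

theorem clarkeQuot_neg_add_smul (g : X → ℝ) (h x : X) (t : ℝ) :
    clarkeQuot g (-h) (x + t • h, t) = -clarkeQuot g h (x, t) := by
  simp only [clarkeQuot, smul_neg, add_neg_cancel_right]
  ring

theorem tendsto_add_smul_nhds_prod_nhdsGT (x₀ h : X) :
    Tendsto (fun p : X × ℝ => p.1 + p.2 • h) (𝓝 x₀ ×ˢ 𝓝[>] 0) (𝓝 x₀) := by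
  simpa using (tendsto_fst (f := 𝓝 x₀) (g := 𝓝[>] (0 : ℝ))).add
    ((tendsto_snd.mono_right nhdsWithin_le_nhds).smul_const h)

variable {g : X → ℝ} {x₀ : X} {U : Set X} {K : NNReal}

theorem eventually_abs_clarkeQuot_le (hU : U ∈ 𝓝 x₀) (hg : LipschitzOnWith K g U) (h : X) :
    ∀ᶠ p in 𝓝 x₀ ×ˢ 𝓝[>] 0, |clarkeQuot g h p| ≤ K * ‖h‖ := by
  filter_upwards [tendsto_fst hU, tendsto_add_smul_nhds_prod_nhdsGT x₀ h hU,
    tendsto_snd self_mem_nhdsWithin] with p hp₁ hp₂ (hp : 0 < p.2)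
  rw [clarkeQuot, abs_div, abs_of_pos hp, div_le_iff₀ hp]
  calc |g (p.1 + p.2 • h) - g p.1| ≤ K * dist (p.1 + p.2 • h) p.1 := hg.dist_le_mul _ hp₂ _ hp₁
    _ = K * ‖h‖ * p.2 := by
      rw [dist_eq_norm, add_sub_cancel_left, norm_smul, Real.norm_of_nonneg hp.le]
      ring

theorem isBoundedUnder_abs_clarkeQuot (hU : U ∈ 𝓝 x₀) (hg : LipschitzOnWith K g U) (h : X)
    {F : Filter (X × ℝ)} (hF : F ≤ 𝓝 x₀ ×ˢ 𝓝[>] 0) :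
    IsBoundedUnder (· ≤ ·) F fun p => |clarkeQuot g h p| :=
  isBoundedUnder_of_eventually_le (hF (eventually_abs_clarkeQuot_le hU hg h))

theorem clarkeDeriv_le_mul_norm (hU : U ∈ 𝓝 x₀) (hg : LipschitzOnWith K g U) (h : X) :
    clarkeDeriv g x₀ h ≤ K * ‖h‖ := by
  have hb := isBoundedUnder_le_abs.1 (isBoundedUnder_abs_clarkeQuot hU hg h le_rfl)
  exact limsup_le_of_le hb.2.isCoboundedUnder_le
    ((eventually_abs_clarkeQuot_le hU hg h).mono fun _ hp => (abs_le.1 hp).2)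

theorem clarkeDeriv_add_le (hU : U ∈ 𝓝 x₀) (hg : LipschitzOnWith K g U) (h₁ h₂ : X) :
    clarkeDeriv g x₀ (h₁ + h₂) ≤ clarkeDeriv g x₀ h₁ + clarkeDeriv g x₀ h₂ := by
  set F : Filter (X × ℝ) := 𝓝 x₀ ×ˢ 𝓝[>] 0
  set m : X × ℝ → X × ℝ := fun p => (p.1 + p.2 • h₂, p.2)
  have hm : Tendsto m F F := (tendsto_add_smul_nhds_prod_nhdsGT x₀ h₂).prodMk tendsto_snd
  have hb₁ := isBoundedUnder_le_abs.1 (isBoundedUnder_abs_clarkeQuot hU hg h₁ le_rfl)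
  have hb₁m := isBoundedUnder_le_abs.1 (isBoundedUnder_abs_clarkeQuot hU hg h₁ hm)
  have hb₂ := isBoundedUnder_le_abs.1 (isBoundedUnder_abs_clarkeQuot hU hg h₂ le_rfl)
  have hsplit : clarkeQuot g (h₁ + h₂) = clarkeQuot g h₁ ∘ m + clarkeQuot g h₂ :=
    funext (clarkeQuot_add g h₁ h₂)
  calc clarkeDeriv g x₀ (h₁ + h₂)
      ≤ limsup (clarkeQuot g h₁ ∘ m) F + limsup (clarkeQuot g h₂) F := by
        rw [clarkeDeriv_eq_limsup, hsplit]
        exact limsup_add_le hb₁m.2 hb₁m.1 hb₂.2.isCoboundedUnder_le hb₂.1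
    _ ≤ clarkeDeriv g x₀ h₁ + clarkeDeriv g x₀ h₂ :=
      add_le_add (hm.limsup_comp_le_limsup hb₁m.2.isCoboundedUnder_le hb₁.1) le_rfl

theorem clarkeDeriv_smul (hU : U ∈ 𝓝 x₀) (hg : LipschitzOnWith K g U) {c : ℝ} (hc : 0 < c)
    (h : X) : clarkeDeriv g x₀ (c • h) = c * clarkeDeriv g x₀ h := by
  have hmap : map (fun p : X × ℝ => (p.1, c * p.2)) (𝓝 x₀ ×ˢ 𝓝[>] 0) = 𝓝 x₀ ×ˢ 𝓝[>] 0 := by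
    have hGT : map (c * ·) (𝓝[>] (0 : ℝ)) = 𝓝[>] 0 := by
      simpa [Set.image_mul_left_Ioi hc] using
        (Homeomorph.mulLeft₀ c hc.ne').isEmbedding.map_nhdsWithin_eq (Ioi 0) 0
    have := prod_map_map_eq' id (c * ·) (𝓝 x₀) (𝓝[>] (0 : ℝ))
    rw [map_id, hGT] at this
    exact this.symm
  have hb := isBoundedUnder_le_abs.1 (isBoundedUnder_abs_clarkeQuot hU hg h le_rfl)
  rw [clarkeDeriv_eq_limsup, clarkeDeriv_eq_limsup,
    show clarkeQuot g (c • h) = ((c * ·) ∘ clarkeQuot g h) ∘ fun p => (p.1, c * p.2) from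
      funext (clarkeQuot_smul g hc.ne' h), limsup_comp, hmap]
  exact ((monotone_mul_left_of_nonneg hc.le).map_limsup_of_continuousAt _
    (continuous_const_mul c).continuousAt hb.1 hb.2.isCoboundedUnder_le).symm

theorem exists_mem_clarkeSubdiff_apply_eq (hU : U ∈ 𝓝 x₀) (hg : LipschitzOnWith K g U) {d : X}
    {y : ℝ} (hy : MapClusterPt y (𝓝[>] 0) fun t => clarkeQuot g d (x₀, t)) :
    ∃ L ∈ clarkeSubdiff g x₀, L d = y := by
  have hpt : Tendsto (fun t : ℝ => (x₀, t)) (𝓝[>] 0) (𝓝 x₀ ×ˢ 𝓝[>] 0) :=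
    tendsto_const_nhds.prodMk tendsto_id
  have hseg : Tendsto (fun t : ℝ => (x₀ + t • d, t)) (𝓝[>] 0) (𝓝 x₀ ×ˢ 𝓝[>] 0) :=
    (tendsto_add_smul_nhds_prod_nhdsGT x₀ d).comp hpt |>.prodMk tendsto_id
  have hle : y ≤ clarkeDeriv g x₀ d :=
    (hy.of_comp hpt).le_limsup
      (isBoundedUnder_le_abs.1 (isBoundedUnder_abs_clarkeQuot hU hg d le_rfl)).1
  have hneg : MapClusterPt (-y) (𝓝[>] 0) (clarkeQuot g (-d) ∘ fun t => (x₀ + t • d, t)) := by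
    convert hy.continuousAt_comp continuous_neg.continuousAt using 1
    exact funext fun t => clarkeQuot_neg_add_smul g d x₀ t
  have hle' : -y ≤ clarkeDeriv g x₀ (-d) :=
    (hneg.of_comp hseg).le_limsup
      (isBoundedUnder_le_abs.1 (isBoundedUnder_abs_clarkeQuot hU hg (-d) le_rfl)).1
  exact exists_continuousLinearMap_le_sublinear_apply_eq (clarkeDeriv g x₀) K
    (fun c hc x => clarkeDeriv_smul hU hg hc x) (clarkeDeriv_add_le hU hg)
    (clarkeDeriv_le_mul_norm hU hg) hle hle'

end Clarke

theorem liminf_norm_sub_eq_zero_iff_mapClusterPt {α E : Type*} [SeminormedAddCommGroup E]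
    {l : Filter α} [l.NeBot] {u : α → E} {y : E}
    (hu : IsBoundedUnder (· ≤ ·) l fun a => ‖u a‖) :
    liminf (fun a => ‖y - u a‖) l = 0 ↔ MapClusterPt y l u := by
  obtain ⟨B, hB⟩ := hu
  have hle : IsBoundedUnder (· ≤ ·) l fun a => ‖y - u a‖ :=
    ⟨‖y‖ + B, eventually_map.2 <| (eventually_map.1 hB).mono fun a ha =>
      (norm_sub_le y (u a)).trans (by gcongr)⟩
  have hge : IsBoundedUnder (· ≥ ·) l fun a => ‖y - u a‖ :=
    isBoundedUnder_of_eventually_ge (Eventually.of_forall fun a => norm_nonneg _)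
  have hcluster : MapClusterPt y l u ↔ MapClusterPt 0 l fun a => ‖y - u a‖ := by
    simp only [nhds_basis_ball.mapClusterPt_iff_frequently, mem_ball, dist_eq_norm, sub_zero,
      norm_norm, norm_sub_rev]
  rw [hcluster]
  refine ⟨fun h => h ▸ MapClusterPt.liminf hle.isCoboundedUnder_ge hge, fun h => ?_⟩
  exact le_antisymm (h.liminf_le hge)
    (le_liminf_of_le hle.isCoboundedUnder_ge (Eventually.of_forall fun a => norm_nonneg _))

theorem exists_mem_Ioo_two_div_sq_mul_eq_slope {φ ψ : ℝ → ℝ} {ε : ℝ} (hε : 0 < ε)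
    (hφ : ∀ t ∈ Icc 0 ε, HasDerivAt φ (ψ t) t) :
    ∃ ξ ∈ Ioo 0 ε, 2 / ε ^ 2 * (φ ε - φ 0 - ε * ψ 0) = (ψ ξ - ψ 0) / ξ := by
  have hderiv : ∀ t ∈ Icc 0 ε, HasDerivAt (fun t => φ t - t * ψ 0) (ψ t - ψ 0) t := fun t ht => by
    have := (hφ t ht).sub ((hasDerivAt_id' t).mul_const (ψ 0))
    rwa [one_mul] at this
  obtain ⟨ξ, hξ, hcauchy⟩ := exists_ratio_hasDerivAt_eq_ratio_slope _ _ hε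
    (fun t ht => (hderiv t ht).continuousAt.continuousWithinAt)
    (fun t ht => hderiv t (Ioo_subset_Icc_self ht)) (· ^ 2) (2 * ·)
    (continuous_pow 2).continuousOn (fun t _ => by simpa using hasDerivAt_pow 2 t)
  refine ⟨ξ, hξ, ?_⟩
  rw [div_mul_eq_mul_div, div_eq_div_iff (by positivity) hξ.1.ne']
  linear_combination -hcauchy

theorem IsGateauxDerivOn.hasDerivAt_comp_add_smul {X E : Type*} [NormedAddCommGroup X]
    [NormedSpace ℝ X] [NormedAddCommGroup E] [NormedSpace ℝ E] {f : X → E} {f' : X → X →L[ℝ] E}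
    {D : Set X} (hf : IsGateauxDerivOn f f' D) {x v : X} {t : ℝ} (hx : x + t • v ∈ D) :
    HasDerivAt (fun s : ℝ => f (x + s • v)) (f' (x + t • v) v) t := by
  have h0 := hf _ hx v
  rw [← sub_self t] at h0
  convert h0.comp_sub_const t t using 2 with s
  rw [add_assoc, ← add_smul, add_sub_cancel]

section SecondOrder

variable {X : Type*} [NormedAddCommGroup X] [NormedSpace ℝ X]

noncomputable def secondOrderQuot {E : Type*} [NormedAddCommGroup E] [NormedSpace ℝ E]
    (f : X → E) (f' : X → X →L[ℝ] E) (x₀ d : X) (ε : ℝ) : E :=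
  (2 / ε ^ 2) • (f (x₀ + ε • d) - f x₀ - ε • f' x₀ d)

theorem mem_secondWeakDirDeriv_iff {E : Type*} [NormedAddCommGroup E] [NormedSpace ℝ E]
    {f : X → E} {f' : X → X →L[ℝ] E} {x₀ d : X} {y : E}
    (hb : IsBoundedUnder (· ≤ ·) (𝓝[>] 0) fun ε => ‖secondOrderQuot f f' x₀ d ε‖) :
    y ∈ secondWeakDirDeriv f f' x₀ d ↔ MapClusterPt y (𝓝[>] 0) (secondOrderQuot f f' x₀ d) :=
  liminf_norm_sub_eq_zero_iff_mapClusterPt hb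

theorem IsGateauxDerivOn.exists_secondOrderQuot_eq_clarkeQuot {f : X → ℝ}
    {f' : X → X →L[ℝ] ℝ} {D : Set X} (hf : IsGateauxDerivOn f f' D) {x₀ d : X} {ε : ℝ}
    (hε : 0 < ε) (hseg : ∀ t ∈ Icc 0 ε, x₀ + t • d ∈ D) :
    ∃ ξ ∈ Ioo 0 ε, secondOrderQuot f f' x₀ d ε = clarkeQuot (fun x => f' x d) d (x₀, ξ) := by
  obtain ⟨ξ, hξ, hslope⟩ := exists_mem_Ioo_two_div_sq_mul_eq_slope hε
    (fun t ht => hf.hasDerivAt_comp_add_smul (hseg t ht))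
  refine ⟨ξ, hξ, ?_⟩
  simpa [secondOrderQuot, clarkeQuot] using hslope

theorem IsGateauxDerivOn.exists_secondOrderQuot_eventuallyEq_clarkeQuot_comp {f : X → ℝ}
    {f' : X → X →L[ℝ] ℝ} {D : Set X} (hf : IsGateauxDerivOn f f' D) {x₀ : X} (hD : D ∈ 𝓝 x₀)
    (d : X) : ∃ ξ : ℝ → ℝ, Tendsto ξ (𝓝[>] 0) (𝓝[>] 0) ∧ secondOrderQuot f f' x₀ d =ᶠ[𝓝[>] 0]
      (fun t => clarkeQuot (fun x => f' x d) d (x₀, t)) ∘ ξ := by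
  obtain ⟨δ, hδ, hline⟩ : ∃ δ > 0, ∀ t ∈ ball (0 : ℝ) δ, x₀ + t • d ∈ D := by
    refine Metric.eventually_nhds_iff_ball.1 (Tendsto.eventually ?_ hD)
    simpa using ((tendsto_id (x := 𝓝 (0 : ℝ))).smul_const d).const_add x₀
  have hslope : ∀ ε ∈ Ioo 0 δ, ∃ ξ ∈ Ioo 0 ε,
      secondOrderQuot f f' x₀ d ε = clarkeQuot (fun x => f' x d) d (x₀, ξ) := fun ε hε =>
    hf.exists_secondOrderQuot_eq_clarkeQuot hε.1 fun t ht => hline t <| by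
      rw [Real.ball_eq_Ioo]
      exact Icc_subset_Ioo (by linarith) (by linarith [hε.2]) ht
  choose! ξ hξ hQξ using hslope
  have hξ_mem : ∀ᶠ ε in 𝓝[>] 0, ξ ε ∈ Ioo 0 ε := mem_of_superset (Ioo_mem_nhdsGT hδ) hξ
  refine ⟨ξ, tendsto_nhdsWithin_iff.2 ⟨?_, hξ_mem.mono fun _ h => h.1⟩,
    mem_of_superset (Ioo_mem_nhdsGT hδ) hQξ⟩
  exact tendsto_of_tendsto_of_tendsto_of_le_of_le' tendsto_const_nhds
    (tendsto_id.mono_left nhdsWithin_le_nhds) (hξ_mem.mono fun _ h => h.1.le)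
    (hξ_mem.mono fun _ h => h.2.le)

end SecondOrder

theorem stmt8_general {X : Type*} [NormedAddCommGroup X] [NormedSpace ℝ X]
    {D : Set X} (hD : IsOpen D) (H : X → ℝ) (H' : X → X →L[ℝ] ℝ)
    (hH : IsC11On H H' D) {x₀ : X} (hx₀ : x₀ ∈ D) (d : X) :
    (secondWeakDirDeriv H H' x₀ d).Nonempty ∧
      secondWeakDirDeriv H H' x₀ d ⊆ {r : ℝ | ∃ L ∈ secondSubdiff H' x₀ d, r = L d} := by
  obtain ⟨r, hr, K, hK⟩ := hH.2 x₀ hx₀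
  have hU : ball x₀ r ∩ D ∈ 𝓝 x₀ := inter_mem (ball_mem_nhds x₀ hr) (hD.mem_nhds hx₀)
  obtain ⟨C, hg⟩ : ∃ C, LipschitzOnWith C (fun x => H' x d) (ball x₀ r ∩ D) :=
    ⟨_, (ContinuousLinearMap.apply ℝ ℝ d).lipschitz.comp_lipschitzOnWith hK⟩
  obtain ⟨ξ, hξ, hQ⟩ :=
    hH.1.exists_secondOrderQuot_eventuallyEq_clarkeQuot_comp (hD.mem_nhds hx₀) d
  have hbdd : IsBoundedUnder (· ≤ ·) (𝓝[>] 0) fun ε => ‖secondOrderQuot H H' x₀ d ε‖ := by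
    refine isBoundedUnder_of_eventually_le (a := C * ‖d‖) ?_
    filter_upwards [hQ, (tendsto_const_nhds.prodMk hξ).eventually
      (eventually_abs_clarkeQuot_le hU hg d)] with ε hε hbound
    rwa [hε, Real.norm_eq_abs]
  have hbdd' := isBoundedUnder_le_abs.1 hbdd
  refine ⟨⟨_, (mem_secondWeakDirDeriv_iff hbdd).2
    (MapClusterPt.limsup hbdd'.2.isCoboundedUnder_le hbdd'.1)⟩, fun y hy => ?_⟩
  obtain ⟨L, hL, hLy⟩ := exists_mem_clarkeSubdiff_apply_eq hU hg
    ((hQ.mapClusterPt_iff.1 ((mem_secondWeakDirDeriv_iff hbdd).1 hy)).of_comp hξ)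
  exact ⟨L, hL, hLy.symm⟩

theorem stmt8 {X : Type*} [NormedAddCommGroup X] [NormedSpace ℝ X] [CompleteSpace X]
    (hseq : ∀ L : ℕ → X →L[ℝ] ℝ, (∀ n, ‖L n‖ ≤ 1) →
      ∃ (L₀ : X →L[ℝ] ℝ) (φ : ℕ → ℕ), StrictMono φ ∧
        ∀ x, Filter.Tendsto (fun n => L (φ n) x) Filter.atTop (nhds (L₀ x)))
    {D : Set X} (hD : IsOpen D) (H : X → ℝ) (H' : X → X →L[ℝ] ℝ)
    (hH : IsC11On H H' D) {x₀ : X} (hx₀ : x₀ ∈ D) (d : X) :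
    (secondWeakDirDeriv H H' x₀ d).Nonempty ∧
      secondWeakDirDeriv H H' x₀ d ⊆ {r : ℝ | ∃ L ∈ secondSubdiff H' x₀ d, r = L d} :=
  stmt8_general hD H H' hH hx₀ d
end
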